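/- arXiv:1102.1061 — 3 statements merged into one kernel-verified Lean document; each statement's English description precedes it below -/
import Mathlib

section
/- Reflection for the universal IK-CPS model: for any formula A and context Γ, if there is a neutral proof term e with Γ ⊢ e : A in MQC, then Γ forces A in the universal model. -/
/-- First-order formulas of minimal predicate logic (MQC), with atomic
formulas drawn from `Atm` and quantification encoded via functions from
individual terms `Trm` (weak HOAS). -/
inductive Fml (Atm Trm : Type) : Type where
  | atom : Atm → Fml Atm Trm
  | and : Fml Atm Trm → Fml Atm Trm → Fml Atm Trm
  | or : Fml Atm Trm → Fml Atm Trm → Fml Atm Trm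
  | imp : Fml Atm Trm → Fml Atm Trm → Fml Atm Trm
  | all : (Trm → Fml Atm Trm) → Fml Atm Trm
  | ex : (Trm → Fml Atm Trm) → Fml Atm Trm

/-- An Intuitionistic Kripke-CPS model. -/
structure IKCPS (Atm Trm : Type) where
  W : Type
  le : W → W → Prop
  le_refl : ∀ w, le w w
  le_trans : ∀ {a b c}, le a b → le b c → le a c
  /-- binary exploding relation between worlds and formulas -/
  explode : W → Fml Atm Trm → Prop
  /-- strong forcing of atomic formulas -/
  satom : W → Atm → Prop
  satom_mono : ∀ {w w' X}, le w w' → satom w X → satom w' X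
  Dom : W → Set Trm
  Dom_mono : ∀ {w w'}, le w w' → Dom w ⊆ Dom w'

namespace IKCPS

variable {Atm Trm : Type}

/-- The continuation ("forcing") monad over a predicate `S` of strong forcing:
`w ⊩ A` iff for all formulas `C`, for all `w' ≥ w`,
`(∀ w'' ≥ w', w'' ⊩ₛ A → w'' ⊩_E C) → w' ⊩_E C`. -/
def fa (M : IKCPS Atm Trm) (S : M.W → Prop) (w : M.W) : Prop :=
  ∀ C : Fml Atm Trm, ∀ w', M.le w w' →
    (∀ w'', M.le w' w'' → S w'' → M.explode w'' C) → M.explode w' C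

/-- Strong forcing, extended from atomic to composite formulas. -/
def sforces (M : IKCPS Atm Trm) : Fml Atm Trm → M.W → Prop
  | .atom X => fun w => M.satom w X
  | .and A B => fun w => M.fa (M.sforces A) w ∧ M.fa (M.sforces B) w
  | .or A B => fun w => M.fa (M.sforces A) w ∨ M.fa (M.sforces B) w
  | .imp A B => fun w => ∀ w', M.le w w' → M.fa (M.sforces A) w' → M.fa (M.sforces B) w'
  | .all A => fun w => ∀ w', M.le w w' → ∀ t ∈ M.Dom w', M.fa (M.sforces (A t)) w'
  | .ex A => fun w => ∃ t ∈ M.Dom w, M.fa (M.sforces (A t)) w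

/-- (Non-strong) forcing. -/
def forces (M : IKCPS Atm Trm) (A : Fml Atm Trm) (w : M.W) : Prop :=
  M.fa (M.sforces A) w

end IKCPS

/-- Natural deduction for minimal intuitionistic predicate logic (MQC).
`Deriv Γ A` states that there is a proof term `p` with `Γ ⊢ p : A`. -/
inductive Deriv {Atm Trm : Type} : List (Fml Atm Trm) → Fml Atm Trm → Prop where
  | ax {Γ A} : A ∈ Γ → Deriv Γ A
  | andI {Γ A B} : Deriv Γ A → Deriv Γ B → Deriv Γ (.and A B)
  | andE1 {Γ A B} : Deriv Γ (.and A B) → Deriv Γ A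
  | andE2 {Γ A B} : Deriv Γ (.and A B) → Deriv Γ B
  | orI1 {Γ A B} : Deriv Γ A → Deriv Γ (.or A B)
  | orI2 {Γ A B} : Deriv Γ B → Deriv Γ (.or A B)
  | orE {Γ A B C} : Deriv Γ (.or A B) → Deriv (A :: Γ) C → Deriv (B :: Γ) C → Deriv Γ C
  | impI {Γ A B} : Deriv (A :: Γ) B → Deriv Γ (.imp A B)
  | impE {Γ A B} : Deriv Γ (.imp A B) → Deriv Γ A → Deriv Γ B
  | allI {Γ A} : (∀ t, Deriv Γ (A t)) → Deriv Γ (.all A)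
  | allE {Γ A} (t : Trm) : Deriv Γ (.all A) → Deriv Γ (A t)
  | exI {Γ A} (t : Trm) : Deriv Γ (A t) → Deriv Γ (.ex A)
  | exE {Γ A C} : Deriv Γ (.ex A) → (∀ t, Deriv (A t :: Γ) C) → Deriv Γ C

/-- Normal (`b = true`) and neutral (`b = false`) natural deduction derivations,
defined simultaneously.  `NND true Γ A` means there is a proof term in normal
form `r` with `Γ ⊢ r : A`; `NND false Γ A` means there is a neutral proof term
`e` with `Γ ⊢ e : A`. -/
inductive NND {Atm Trm : Type} : Bool → List (Fml Atm Trm) → Fml Atm Trm → Prop where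
  | ne {Γ A} : NND false Γ A → NND true Γ A
  | ax {Γ A} : A ∈ Γ → NND false Γ A
  | andI {Γ A B} : NND true Γ A → NND true Γ B → NND true Γ (.and A B)
  | andE1 {Γ A B} : NND false Γ (.and A B) → NND false Γ A
  | andE2 {Γ A B} : NND false Γ (.and A B) → NND false Γ B
  | orI1 {Γ A B} : NND true Γ A → NND true Γ (.or A B)
  | orI2 {Γ A B} : NND true Γ B → NND true Γ (.or A B)
  | orE {Γ A B C} : NND false Γ (.or A B) → NND true (A :: Γ) C → NND true (B :: Γ) C →
      NND false Γ C
  | impI {Γ A B} : NND true (A :: Γ) B → NND true Γ (.imp A B)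
  | impE {Γ A B} : NND false Γ (.imp A B) → NND true Γ A → NND false Γ B
  | allI {Γ A} : (∀ t, NND true Γ (A t)) → NND true Γ (.all A)
  | allE {Γ A} (t : Trm) : NND false Γ (.all A) → NND false Γ (A t)
  | exI {Γ A} (t : Trm) : NND true Γ (A t) → NND true Γ (.ex A)
  | exE {Γ A C} : NND false Γ (.ex A) → (∀ t, NND true (A t :: Γ) C) → NND false Γ C

/-- There is a normal-form derivation `Γ ⊢ r : A`. -/
def NfD {Atm Trm : Type} (Γ : List (Fml Atm Trm)) (A : Fml Atm Trm) : Prop :=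
  NND true Γ A

/-- There is a neutral derivation `Γ ⊢ e : A`. -/
def NeD {Atm Trm : Type} (Γ : List (Fml Atm Trm)) (A : Fml Atm Trm) : Prop :=
  NND false Γ A

theorem NND.weaken {Atm Trm : Type} {b : Bool} {Γ Γ' : List (Fml Atm Trm)}
    {A : Fml Atm Trm} (d : NND b Γ A) (h : Γ ⊆ Γ') : NND b Γ' A := by
  induction d generalizing Γ' with
  | ne _ ih => exact .ne (ih h)
  | ax hm => exact .ax (h hm)
  | andI _ _ ih1 ih2 => exact .andI (ih1 h) (ih2 h)
  | andE1 _ ih => exact .andE1 (ih h)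
  | andE2 _ ih => exact .andE2 (ih h)
  | orI1 _ ih => exact .orI1 (ih h)
  | orI2 _ ih => exact .orI2 (ih h)
  | orE _ _ _ ih ih1 ih2 =>
      exact .orE (ih h) (ih1 (List.cons_subset_cons _ h)) (ih2 (List.cons_subset_cons _ h))
  | impI _ ih => exact .impI (ih (List.cons_subset_cons _ h))
  | impE _ _ ih1 ih2 => exact .impE (ih1 h) (ih2 h)
  | allI _ ih => exact .allI fun t => ih t h
  | allE t _ ih => exact .allE t (ih h)
  | exI t _ ih => exact .exI t (ih h)
  | exE _ _ ih ih2 => exact .exE (ih h) fun t => ih2 t (List.cons_subset_cons _ h)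

/-- The universal IK-CPS model: worlds are contexts of MQC ordered by
inclusion, strong forcing of an atom and the exploding relation are given by
normal-form derivability, and the domain of quantification is constant. -/
def univModel (Atm Trm : Type) : IKCPS Atm Trm where
  W := List (Fml Atm Trm)
  le Γ Γ' := Γ ⊆ Γ'
  le_refl _ := List.Subset.refl _
  le_trans h1 h2 := List.Subset.trans h1 h2
  explode Γ C := NfD Γ C
  satom Γ X := NfD Γ (.atom X)
  satom_mono h d := d.weaken h
  Dom _ := Set.univ
  Dom_mono _ := le_rfl

/-!
Reification (forcing of `A` at `Γ` gives a normal derivation `Γ ⊢ A`) and reflection (a neutral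
derivation `Γ ⊢ A` gives forcing of `A` at `Γ`) are proved together by induction on `A`, since
each needs the other at the premise of an implication. Reification runs the continuation with
answer formula `A` itself. Reflection mostly returns a strong forcing directly; for `∨` and `∃`
it cannot, and instead takes the answer formula `C` of the continuation, calls the continuation
in the context extended by the hypothesis `A`, `B` or `A t`, and closes with `∨`- or
`∃`-elimination on the weakened neutral derivation.
-/

namespace IKCPS

variable {Atm Trm : Type} {M : IKCPS Atm Trm} {S : M.W → Prop} {w : M.W}

theorem fa_of_forall_le (h : ∀ w', M.le w w' → S w') : M.fa S w :=
  fun _ w' hw k => k w' (M.le_refl w') (h w' hw)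

theorem explode_of_fa {C : Fml Atm Trm} (h : M.fa S w)
    (k : ∀ w', M.le w w' → S w' → M.explode w' C) : M.explode w C :=
  h C w (M.le_refl w) k

end IKCPS

namespace univModel

variable {Atm Trm : Type}

def Reifies (A : Fml Atm Trm) : Prop :=
  ∀ Γ, (univModel Atm Trm).forces A Γ → NfD Γ A

def Reflects (A : Fml Atm Trm) : Prop :=
  ∀ Γ, NeD Γ A → (univModel Atm Trm).forces A Γ

variable {A B : Fml Atm Trm} {F : Trm → Fml Atm Trm}

theorem reifies_atom (X : Atm) : Reifies (.atom X : Fml Atm Trm) :=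
  fun _ h => IKCPS.explode_of_fa h fun _ _ s => s

theorem reflects_atom (X : Atm) : Reflects (.atom X : Fml Atm Trm) :=
  fun _ e => IKCPS.fa_of_forall_le fun _ hle => .ne (e.weaken hle)

theorem reifies_and (hA : Reifies A) (hB : Reifies B) : Reifies (.and A B) :=
  fun _ h => IKCPS.explode_of_fa h fun Γ' _ s => .andI (hA Γ' s.1) (hB Γ' s.2)

theorem reflects_and (hA : Reflects A) (hB : Reflects B) : Reflects (.and A B) :=
  fun _ e => IKCPS.fa_of_forall_le fun Γ' hle =>
    ⟨hA Γ' (.andE1 (e.weaken hle)), hB Γ' (.andE2 (e.weaken hle))⟩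

theorem reifies_or (hA : Reifies A) (hB : Reifies B) : Reifies (.or A B) := by
  intro _ h
  refine IKCPS.explode_of_fa h fun Γ' _ s => ?_
  rcases s with sA | sB
  · exact .orI1 (hA Γ' sA)
  · exact .orI2 (hB Γ' sB)

theorem reflects_or (hA : Reflects A) (hB : Reflects B) : Reflects (.or A B) := by
  intro _ e C Γ' hle k
  have caseA : NfD (A :: Γ') C :=
    k _ (List.subset_cons_self _ _) (.inl (hA _ (.ax List.mem_cons_self)))
  have caseB : NfD (B :: Γ') C :=
    k _ (List.subset_cons_self _ _) (.inr (hB _ (.ax List.mem_cons_self)))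
  exact .ne (.orE (e.weaken hle) caseA caseB)

theorem reifies_imp (hA : Reflects A) (hB : Reifies B) : Reifies (.imp A B) :=
  fun _ h => IKCPS.explode_of_fa h fun _ _ s =>
    .impI (hB _ (s _ (List.subset_cons_self _ _) (hA _ (.ax List.mem_cons_self))))

theorem reflects_imp (hA : Reifies A) (hB : Reflects B) : Reflects (.imp A B) :=
  fun _ e => IKCPS.fa_of_forall_le fun _ hle Γ'' hle' fA =>
    hB Γ'' (.impE (e.weaken (List.Subset.trans hle hle')) (hA Γ'' fA))

theorem reifies_all (h : ∀ t, Reifies (F t)) : Reifies (.all F) :=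
  fun _ hF => IKCPS.explode_of_fa hF fun Γ' _ s =>
    .allI fun t => h t Γ' (s Γ' (List.Subset.refl _) t (Set.mem_univ t))

theorem reflects_all (h : ∀ t, Reflects (F t)) : Reflects (.all F) :=
  fun _ e => IKCPS.fa_of_forall_le fun _ hle Γ'' hle' t _ =>
    h t Γ'' (.allE t (e.weaken (List.Subset.trans hle hle')))

theorem reifies_ex (h : ∀ t, Reifies (F t)) : Reifies (.ex F) :=
  fun _ hF => IKCPS.explode_of_fa hF fun Γ' _ ⟨t, _, ft⟩ => .exI t (h t Γ' ft)

theorem reflects_ex (h : ∀ t, Reflects (F t)) : Reflects (.ex F) :=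
  fun _ e _ _ hle k => .ne <| .exE (e.weaken hle) fun t =>
    k _ (List.subset_cons_self _ _) ⟨t, Set.mem_univ t, h t _ (.ax List.mem_cons_self)⟩

theorem reifies_and_reflects (A : Fml Atm Trm) : Reifies A ∧ Reflects A := by
  induction A with
  | atom X => exact ⟨reifies_atom X, reflects_atom X⟩
  | and A B ihA ihB => exact ⟨reifies_and ihA.1 ihB.1, reflects_and ihA.2 ihB.2⟩
  | or A B ihA ihB => exact ⟨reifies_or ihA.1 ihB.1, reflects_or ihA.2 ihB.2⟩
  | imp A B ihA ihB => exact ⟨reifies_imp ihA.2 ihB.1, reflects_imp ihA.1 ihB.2⟩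
  | all F ih => exact ⟨reifies_all fun t => (ih t).1, reflects_all fun t => (ih t).2⟩
  | ex F ih => exact ⟨reifies_ex fun t => (ih t).1, reflects_ex fun t => (ih t).2⟩

end univModel

/-- Reflection for the universal IK-CPS model: a neutral
derivation `Γ ⊢ e : A` yields forcing of `A` at `Γ`. -/
theorem reflect {Atm Trm : Type} (A : Fml Atm Trm) (Γ : List (Fml Atm Trm))
    (h : NeD Γ A) : (univModel Atm Trm).forces A Γ :=
  (univModel.reifies_and_reflects A).2 Γ h
end

section
/- Normalisation by evaluation for MQC: every derivable sequent Γ ⊢ p : A of MQC has a derivation Γ ⊢ p' : A where p' is a proof term in normal form. -/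
/-!
Forcing in an IK-CPS model is a continuation monad over strong forcing, and every rule of
MQC is sound for it: introductions are `return`s of strong forcing and eliminations are
`bind`s. In the universal model the exploding relation is normal derivability, so one
can reify forcing into a normal derivation, and reflect a neutral derivation into
forcing. A neutral derivation of a disjunction or an existential does not yield strong
forcing; it is reflected instead by building the normal derivation `orE`/`exE` at the
answer type of the continuation. Evaluating a derivation in the universal model in the
environment of reflected hypotheses and reifying the result normalises it.
-/

namespace IKCPS

variable {Atm Trm : Type} (M : IKCPS Atm Trm)

theorem fa_mono {S : M.W → Prop} {w w' : M.W} (h : M.le w w') (f : M.fa S w) : M.fa S w' :=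
  fun C w'' h' k => f C w'' (M.le_trans h h') k

theorem sforces_mono : ∀ (A : Fml Atm Trm) {w w' : M.W}, M.le w w' →
    M.sforces A w → M.sforces A w'
  | .atom _, _, _, h, s => M.satom_mono h s
  | .and _ _, _, _, h, s => ⟨M.fa_mono h s.1, M.fa_mono h s.2⟩
  | .or _ _, _, _, h, s => s.imp (M.fa_mono h) (M.fa_mono h)
  | .imp _ _, _, _, h, s => fun w'' h' f => s w'' (M.le_trans h h') f
  | .all _, _, _, h, s => fun w'' h' t ht => s w'' (M.le_trans h h') t ht
  | .ex _, _, _, h, ⟨t, ht, f⟩ => ⟨t, M.Dom_mono h ht, M.fa_mono h f⟩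

theorem forces_mono {A : Fml Atm Trm} {w w' : M.W} (h : M.le w w') (f : M.forces A w) :
    M.forces A w' :=
  M.fa_mono h f

theorem forces_of_sforces {A : Fml Atm Trm} {w : M.W} (s : M.sforces A w) : M.forces A w :=
  fun _ w' h k => k w' (M.le_refl w') (M.sforces_mono A h s)

theorem forces_bind {A B : Fml Atm Trm} {w : M.W} (f : M.forces A w)
    (g : ∀ w', M.le w w' → M.sforces A w' → M.forces B w') : M.forces B w :=
  fun C w' h k => f C w' h fun w'' h' s =>
    g w'' (M.le_trans h h') s C w'' (M.le_refl w'') fun v hv sb => k v (M.le_trans h' hv) sb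

theorem forces_cons {Γ : List (Fml Atm Trm)} {A : Fml Atm Trm} {w w' : M.W}
    (ρ : ∀ B ∈ Γ, M.forces B w) (h : M.le w w') (f : M.forces A w') :
    ∀ B ∈ A :: Γ, M.forces B w' := by
  intro B hB
  rcases List.mem_cons.mp hB with rfl | hB
  · exact f
  · exact M.forces_mono h (ρ B hB)

theorem soundness (hDom : ∀ w t, t ∈ M.Dom w) {Γ : List (Fml Atm Trm)} {A : Fml Atm Trm}
    (d : Deriv Γ A) : ∀ w, (∀ B ∈ Γ, M.forces B w) → M.forces A w := by
  induction d with
  | ax hm => exact fun _ ρ => ρ _ hm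
  | andI _ _ ih₁ ih₂ => exact fun w ρ => M.forces_of_sforces ⟨ih₁ w ρ, ih₂ w ρ⟩
  | andE1 _ ih => exact fun w ρ => M.forces_bind (ih w ρ) fun _ _ s => s.1
  | andE2 _ ih => exact fun w ρ => M.forces_bind (ih w ρ) fun _ _ s => s.2
  | orI1 _ ih => exact fun w ρ => M.forces_of_sforces (.inl (ih w ρ))
  | orI2 _ ih => exact fun w ρ => M.forces_of_sforces (.inr (ih w ρ))
  | orE _ _ _ ih ih₁ ih₂ =>
    exact fun w ρ => M.forces_bind (ih w ρ) fun w' h s =>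
      s.elim (fun f => ih₁ w' (M.forces_cons ρ h f)) (fun f => ih₂ w' (M.forces_cons ρ h f))
  | impI _ ih =>
    exact fun w ρ => M.forces_of_sforces fun w' h f => ih w' (M.forces_cons ρ h f)
  | impE _ _ ih₁ ih₂ =>
    exact fun w ρ => M.forces_bind (ih₁ w ρ) fun w' h s =>
      s w' (M.le_refl w') (M.forces_mono h (ih₂ w ρ))
  | allI _ ih =>
    exact fun w ρ => M.forces_of_sforces fun w' h t _ =>
      ih t w' fun B hB => M.forces_mono h (ρ B hB)
  | allE t _ ih =>
    exact fun w ρ => M.forces_bind (ih w ρ) fun w' _ s => s w' (M.le_refl w') t (hDom w' t)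
  | exI t _ ih => exact fun w ρ => M.forces_of_sforces ⟨t, hDom w t, ih w ρ⟩
  | exE _ _ ih ih₂ =>
    exact fun w ρ => M.forces_bind (ih w ρ) fun w' h ⟨t, _, f⟩ =>
      ih₂ t w' (M.forces_cons ρ h f)

end IKCPS

namespace univModel

variable {Atm Trm : Type}

theorem nfD_of_forces {A : Fml Atm Trm} {Γ : List (Fml Atm Trm)}
    (reify : ∀ Δ, Γ ⊆ Δ → (univModel Atm Trm).sforces A Δ → NfD Δ A)
    (f : (univModel Atm Trm).forces A Γ) : NfD Γ A :=
  f A Γ (List.Subset.refl Γ) reify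

theorem reify_and_reflect (A : Fml Atm Trm) :
    (∀ Γ, (univModel Atm Trm).forces A Γ → NfD Γ A) ∧
      (∀ Γ, NeD Γ A → (univModel Atm Trm).forces A Γ) := by
  induction A with
  | atom _ =>
    exact ⟨fun _ => nfD_of_forces fun _ _ s => s, fun _ e => IKCPS.forces_of_sforces _ (.ne e)⟩
  | and A B ihA ihB =>
    obtain ⟨reifyA, reflectA⟩ := ihA
    obtain ⟨reifyB, reflectB⟩ := ihB
    exact ⟨fun _ => nfD_of_forces fun _ _ s => .andI (reifyA _ s.1) (reifyB _ s.2),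
      fun _ e => IKCPS.forces_of_sforces _ ⟨reflectA _ (.andE1 e), reflectB _ (.andE2 e)⟩⟩
  | or A B ihA ihB =>
    obtain ⟨reifyA, reflectA⟩ := ihA
    obtain ⟨reifyB, reflectB⟩ := ihB
    refine ⟨fun _ => nfD_of_forces fun _ _ s =>
      s.elim (fun f => .orI1 (reifyA _ f)) (fun f => .orI2 (reifyB _ f)), ?_⟩
    intro _ e _ Γ' h k
    exact .ne (.orE (e.weaken h)
      (k _ (List.subset_cons_self A Γ') (.inl (reflectA _ (.ax List.mem_cons_self))))
      (k _ (List.subset_cons_self B Γ') (.inr (reflectB _ (.ax List.mem_cons_self)))))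
  | imp A B ihA ihB =>
    obtain ⟨reifyA, reflectA⟩ := ihA
    obtain ⟨reifyB, reflectB⟩ := ihB
    refine ⟨fun _ => nfD_of_forces fun Δ _ s => .impI (reifyB _ ?_),
      fun _ e => IKCPS.forces_of_sforces _ fun _ h f =>
        reflectB _ (.impE (e.weaken h) (reifyA _ f))⟩
    exact s (A :: Δ) (List.subset_cons_self A Δ) (reflectA _ (.ax List.mem_cons_self))
  | all A ih =>
    exact ⟨fun _ => nfD_of_forces fun Δ _ s =>
        .allI fun t => (ih t).1 _ (s Δ (List.Subset.refl Δ) t trivial),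
      fun _ e => IKCPS.forces_of_sforces _ fun _ h t _ => (ih t).2 _ (.allE t (e.weaken h))⟩
  | ex A ih =>
    refine ⟨fun _ => nfD_of_forces fun _ _ ⟨t, _, f⟩ => .exI t ((ih t).1 _ f), ?_⟩
    intro _ e _ Γ' h k
    exact .ne (.exE (e.weaken h) fun t =>
      k _ (List.subset_cons_self (A t) Γ') ⟨t, trivial, (ih t).2 _ (.ax List.mem_cons_self)⟩)

theorem reify {A : Fml Atm Trm} {Γ : List (Fml Atm Trm)}
    (f : (univModel Atm Trm).forces A Γ) : NfD Γ A :=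
  (reify_and_reflect A).1 Γ f

theorem reflect {A : Fml Atm Trm} {Γ : List (Fml Atm Trm)} (e : NeD Γ A) :
    (univModel Atm Trm).forces A Γ :=
  (reify_and_reflect A).2 Γ e

end univModel

/-- Normalisation by evaluation for MQC: every derivable sequent
has a derivation by a proof term in normal form. -/
theorem nbe {Atm Trm : Type} (Γ : List (Fml Atm Trm)) (A : Fml Atm Trm)
    (d : Deriv Γ A) : NfD Γ A :=
  univModel.reify <|
    (univModel Atm Trm).soundness (fun _ _ => trivial) d Γ fun _ hB => univModel.reflect (.ax hB)
end

section
/- Normalisation by evaluation via call-by-value IK-CPS models works for closed terms: every closed derivable sequent ⊢ p : A of MQC has a normal-form derivation ⊢ p' : A. -/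
namespace IKCPS

variable {Atm Trm : Type}

/-- Call-by-value strong forcing. -/
def sforcesV (M : IKCPS Atm Trm) : Fml Atm Trm → M.W → Prop
  | .atom X => fun w => M.satom w X
  | .and A B => fun w => M.sforcesV A w ∧ M.sforcesV B w
  | .or A B => fun w => M.sforcesV A w ∨ M.sforcesV B w
  | .imp A B => fun w => ∀ w', M.le w w' → M.sforcesV A w' → M.fa (M.sforcesV B) w'
  | .all A => fun w => ∀ w', M.le w w' → ∀ t ∈ M.Dom w', M.fa (M.sforcesV (A t)) w'
  | .ex A => fun w => ∃ t ∈ M.Dom w, M.sforcesV (A t) w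

/-- Call-by-value (non-strong) forcing. -/
def forcesV (M : IKCPS Atm Trm) (A : Fml Atm Trm) (w : M.W) : Prop :=
  M.fa (M.sforcesV A) w

end IKCPS

/-!
The call-by-value forcing `M.forcesV` is the continuation monad `M.fa` applied to call-by-value
strong forcing, so soundness is a monadic evaluator: each elimination rule binds the forcing of
its major premise. In the universal model of contexts, strong forcing reifies to a normal
derivation and a neutral derivation reflects to forcing; for disjunctions and existentials
reflection is where the continuation is used, since it lets the neutral elimination be inserted
at the point where a normal form of any answer type `C` is demanded. Running the forcing of a
closed derivation with the reifying continuation yields its normal form.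
-/

namespace IKCPS

variable {Atm Trm : Type} (M : IKCPS Atm Trm)

theorem fa_pure {S : M.W → Prop} (hS : ∀ {w w'}, M.le w w' → S w → S w') {w : M.W}
    (s : S w) : M.fa S w :=
  fun _ w' h k => k w' (M.le_refl _) (hS h s)

theorem fa_bind {S T : M.W → Prop} {w : M.W} (hs : M.fa S w)
    (f : ∀ w', M.le w w' → S w' → M.fa T w') : M.fa T w :=
  fun C w' h k => hs C w' h fun w'' h' s =>
    f w'' (M.le_trans h h') s C w'' (M.le_refl _) fun w''' h'' t => k w''' (M.le_trans h' h'') t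

theorem sforcesV_mono (A : Fml Atm Trm) {w w' : M.W} (h : M.le w w') :
    M.sforcesV A w → M.sforcesV A w' := by
  induction A generalizing w w' with
  | atom X => exact M.satom_mono h
  | and A B ihA ihB => exact fun s => ⟨ihA h s.1, ihB h s.2⟩
  | or A B ihA ihB => exact Or.imp (ihA h) (ihB h)
  | imp A B => exact fun s w'' h' => s w'' (M.le_trans h h')
  | all A => exact fun s w'' h' => s w'' (M.le_trans h h')
  | ex A ih => exact fun ⟨t, ht, s⟩ => ⟨t, M.Dom_mono h ht, ih t h s⟩

theorem forcesV_of_sforcesV {A : Fml Atm Trm} {w : M.W} (s : M.sforcesV A w) :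
    M.forcesV A w :=
  M.fa_pure (M.sforcesV_mono A) s

def sforcesCtxV (Γ : List (Fml Atm Trm)) (w : M.W) : Prop :=
  ∀ B ∈ Γ, M.sforcesV B w

variable {M}

theorem sforcesCtxV.mono {Γ : List (Fml Atm Trm)} {w w' : M.W} (h : M.le w w')
    (hΓ : M.sforcesCtxV Γ w) : M.sforcesCtxV Γ w' :=
  fun B hB => M.sforcesV_mono B h (hΓ B hB)

theorem sforcesCtxV.cons {Γ : List (Fml Atm Trm)} {A : Fml Atm Trm} {w : M.W}
    (hA : M.sforcesV A w) (hΓ : M.sforcesCtxV Γ w) : M.sforcesCtxV (A :: Γ) w :=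
  List.forall_mem_cons.2 ⟨hA, hΓ⟩

theorem sforcesCtxV_nil (w : M.W) : M.sforcesCtxV [] w :=
  fun _ h => absurd h List.not_mem_nil

theorem soundV (hDom : ∀ w t, t ∈ M.Dom w) {Γ : List (Fml Atm Trm)} {A : Fml Atm Trm}
    (d : Deriv Γ A) {w : M.W} (hΓ : M.sforcesCtxV Γ w) : M.forcesV A w := by
  induction d generalizing w with
  | ax h => exact M.forcesV_of_sforcesV (hΓ _ h)
  | andI _ _ ihA ihB =>
      exact M.fa_bind (ihA hΓ) fun w₁ h₁ sA => M.fa_bind (ihB (hΓ.mono h₁)) fun _ h₂ sB =>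
        M.forcesV_of_sforcesV ⟨M.sforcesV_mono _ h₂ sA, sB⟩
  | andE1 _ ih => exact M.fa_bind (ih hΓ) fun _ _ s => M.forcesV_of_sforcesV s.1
  | andE2 _ ih => exact M.fa_bind (ih hΓ) fun _ _ s => M.forcesV_of_sforcesV s.2
  | orI1 _ ih => exact M.fa_bind (ih hΓ) fun _ _ s => M.forcesV_of_sforcesV (.inl s)
  | orI2 _ ih => exact M.fa_bind (ih hΓ) fun _ _ s => M.forcesV_of_sforcesV (.inr s)
  | orE _ _ _ ih ihA ihB =>
      exact M.fa_bind (ih hΓ) fun _ h s =>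
        s.elim (fun sA => ihA ((hΓ.mono h).cons sA)) (fun sB => ihB ((hΓ.mono h).cons sB))
  | impI _ ih => exact M.forcesV_of_sforcesV fun _ h sA => ih ((hΓ.mono h).cons sA)
  | impE _ _ ihf iha =>
      exact M.fa_bind (ihf hΓ) fun _ h₁ f =>
        M.fa_bind (iha (hΓ.mono h₁)) fun w₂ h₂ a => f w₂ h₂ a
  | allI _ ih => exact M.forcesV_of_sforcesV fun _ h t _ => ih t (hΓ.mono h)
  | allE t _ ih => exact M.fa_bind (ih hΓ) fun w' _ s => s w' (M.le_refl _) t (hDom w' t)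
  | exI t _ ih =>
      exact M.fa_bind (ih hΓ) fun w' _ s => M.forcesV_of_sforcesV ⟨t, hDom w' t, s⟩
  | exE _ _ ih ihC =>
      exact M.fa_bind (ih hΓ) fun _ h ⟨t, _, s⟩ => ihC t ((hΓ.mono h).cons s)

end IKCPS

section Completeness

variable {Atm Trm : Type}

local notation "𝕌" => univModel Atm Trm

def ReifiesV (A : Fml Atm Trm) : Prop :=
  ∀ Γ, (𝕌).sforcesV A Γ → NfD Γ A

def ReflectsV (A : Fml Atm Trm) : Prop :=
  ∀ Γ, NeD Γ A → (𝕌).forcesV A Γ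

theorem ReflectsV.nfD_cons {A C : Fml Atm Trm} (hA : ReflectsV A) {Γ : List (Fml Atm Trm)}
    (k : ∀ Δ, A :: Γ ⊆ Δ → (𝕌).sforcesV A Δ → NfD Δ C) : NfD (A :: Γ) C :=
  hA _ (.ax List.mem_cons_self) C _ (List.Subset.refl _) k

theorem reflectsV_or {A B : Fml Atm Trm} (hA : ReflectsV A) (hB : ReflectsV B) :
    ReflectsV (.or A B) := fun _ e _ _ h k =>
  .ne <| .orE (e.weaken h)
    (hA.nfD_cons fun Δ hΔ sA => k Δ (List.subset_of_cons_subset hΔ) (.inl sA))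
    (hB.nfD_cons fun Δ hΔ sB => k Δ (List.subset_of_cons_subset hΔ) (.inr sB))

theorem reflectsV_ex {A : Trm → Fml Atm Trm} (hA : ∀ t, ReflectsV (A t)) :
    ReflectsV (.ex A) := fun _ e _ _ h k =>
  .ne <| .exE (e.weaken h) fun t =>
    (hA t).nfD_cons fun Δ hΔ s => k Δ (List.subset_of_cons_subset hΔ) ⟨t, Set.mem_univ t, s⟩

theorem reifiesV_and_reflectsV (A : Fml Atm Trm) : ReifiesV A ∧ ReflectsV A := by
  induction A with
  | atom X =>
      exact ⟨fun _ s => s, fun _ e => (𝕌).forcesV_of_sforcesV (NND.ne e)⟩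
  | and A B ihA ihB =>
      refine ⟨fun Γ s => .andI (ihA.1 Γ s.1) (ihB.1 Γ s.2), fun Γ e => ?_⟩
      exact (𝕌).fa_bind (ihA.2 Γ e.andE1) fun Γ₁ h₁ sA =>
        (𝕌).fa_bind (ihB.2 Γ₁ (e.andE2.weaken h₁)) fun _ h₂ sB =>
          (𝕌).forcesV_of_sforcesV ⟨(𝕌).sforcesV_mono A h₂ sA, sB⟩
  | or A B ihA ihB =>
      exact ⟨fun Γ s => s.elim (fun sA => .orI1 (ihA.1 Γ sA)) (fun sB => .orI2 (ihB.1 Γ sB)),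
        reflectsV_or ihA.2 ihB.2⟩
  | imp A B ihA ihB =>
      refine ⟨fun Γ s => .impI <| ihA.2.nfD_cons fun Δ hΔ sA => ?_, fun Γ e => ?_⟩
      · exact s Δ (List.subset_of_cons_subset hΔ) sA B Δ (List.Subset.refl _)
          fun Δ' _ sB => ihB.1 Δ' sB
      · exact (𝕌).forcesV_of_sforcesV fun Γ' h sA =>
          ihB.2 Γ' (.impE (e.weaken h) (ihA.1 Γ' sA))
  | all A ih =>
      refine ⟨fun Γ s => .allI fun t => ?_, fun Γ e => ?_⟩
      · exact s Γ (List.Subset.refl _) t (Set.mem_univ t) (A t) Γ (List.Subset.refl _)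
          fun Δ _ st => (ih t).1 Δ st
      · exact (𝕌).forcesV_of_sforcesV fun Γ' h t _ => (ih t).2 Γ' (.allE t (e.weaken h))
  | ex A ih =>
      exact ⟨fun Γ ⟨t, _, st⟩ => .exI t ((ih t).1 Γ st), reflectsV_ex fun t => (ih t).2⟩

theorem nfD_of_forcesV {Γ : List (Fml Atm Trm)} {A : Fml Atm Trm} (f : (𝕌).forcesV A Γ) :
    NfD Γ A :=
  f A Γ (List.Subset.refl _) fun Δ _ s => (reifiesV_and_reflectsV A).1 Δ s

end Completeness

/-- normalisation by evaluation via call-by-value IK-CPS models,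
for closed terms: every sequent derivable in the empty context has a
normal-form derivation. -/
theorem nbeV {Atm Trm : Type} (A : Fml Atm Trm)
    (d : Deriv ([] : List (Fml Atm Trm)) A) : NfD ([] : List (Fml Atm Trm)) A :=
  nfD_of_forcesV ((univModel Atm Trm).soundV (fun _ t => Set.mem_univ t) d
    (IKCPS.sforcesCtxV_nil _))
end
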